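/- arXiv:1004.3584 — 3 statements merged into one kernel-verified Lean document; each statement's English description precedes it below -/
import Mathlib

section
/- If A ∈ ℂ^{m×m} and B ∈ ℂ^{n×n} have no common eigenvalue, then for every C ∈ ℂ^{m×n} the Sylvester equation XB - AX = C has a unique solution X ∈ ℂ^{m×n}. -/
/-!
If `X B = A X` then `X p(B) = p(A) X` for every polynomial `p`; taking `p = χ_A` and using
Cayley–Hamilton gives `X χ_A(B) = 0`. By the spectral mapping theorem the eigenvalues of `χ_A(B)`
are the values `χ_A(μ)` at eigenvalues `μ` of `B`, none of which is a root of `χ_A`, so `χ_A(B)` is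
invertible and `X = 0`. Hence `X ↦ X B - A X` is an injective, and so bijective, endomorphism of
the finite-dimensional space of `m × n` matrices.
-/

open Polynomial

namespace Matrix

variable {m n : Type*} [Fintype m] [Fintype n]

section CommRing

variable {R : Type*} [CommRing R]

def sylvesterMap (A : Matrix m m R) (B : Matrix n n R) : Matrix m n R →ₗ[R] Matrix m n R :=
  mulRightLinearMap m R B - mulLeftLinearMap n R A

@[simp]
theorem sylvesterMap_apply (A : Matrix m m R) (B : Matrix n n R) (X : Matrix m n R) :
    sylvesterMap A B X = X * B - A * X :=
  rfl

variable [DecidableEq m] [DecidableEq n]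

theorem mul_pow_eq_pow_mul {A : Matrix m m R} {B : Matrix n n R} {X : Matrix m n R}
    (hX : X * B = A * X) (k : ℕ) : X * B ^ k = A ^ k * X := by
  induction k with
  | zero => simp
  | succ k ih => rw [pow_succ, pow_succ, ← Matrix.mul_assoc, ih, Matrix.mul_assoc, hX,
      Matrix.mul_assoc]

theorem mul_aeval_eq_aeval_mul {A : Matrix m m R} {B : Matrix n n R} {X : Matrix m n R}
    (hX : X * B = A * X) (p : R[X]) : X * aeval B p = aeval A p * X := by
  induction p using Polynomial.induction_on' with
  | add p q hp hq => rw [map_add, map_add, Matrix.mul_add, Matrix.add_mul, hp, hq]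
  | monomial k c =>
    simp only [aeval_monomial, Algebra.algebraMap_eq_smul_one, Matrix.smul_mul, Matrix.mul_smul,
      Matrix.one_mul, mul_pow_eq_pow_mul hX]

theorem eq_zero_of_mul_eq_mul_of_isUnit_aeval_charpoly {A : Matrix m m R} {B : Matrix n n R}
    {X : Matrix m n R} (hX : X * B = A * X) (hB : IsUnit (aeval B A.charpoly)) : X = 0 := by
  obtain ⟨u, hu⟩ := hB
  have hXu : X * u.val = 0 := by
    rw [hu, mul_aeval_eq_aeval_mul hX, aeval_self_charpoly, Matrix.zero_mul]
  simpa [Matrix.mul_assoc] using congrArg (· * (u⁻¹ : (Matrix n n R)ˣ).val) hXu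

end CommRing

section Field

variable {K : Type*} [Field K] [IsAlgClosed K] [DecidableEq m] [DecidableEq n]

theorem isUnit_aeval_charpoly_of_disjoint_spectrum {A : Matrix m m K} {B : Matrix n n K}
    (h : Disjoint (spectrum K A) (spectrum K B)) : IsUnit (aeval B A.charpoly) := by
  cases isEmpty_or_nonempty m with
  | inl _ => simp
  | inr _ =>
    by_contra hB
    have hdeg : 0 < A.charpoly.degree := by
      rw [charpoly_degree_eq_dim]
      exact_mod_cast Fintype.card_pos
    obtain ⟨μ, hμB, hμ⟩ : 0 ∈ (eval · A.charpoly) '' spectrum K B := by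
      rw [← spectrum.map_polynomial_aeval_of_degree_pos B _ hdeg]
      exact spectrum.zero_mem_iff K |>.mpr hB
    exact Set.disjoint_left.mp h (mem_spectrum_iff_isRoot_charpoly.mpr hμ) hμB

theorem sylvesterMap_bijective {A : Matrix m m K} {B : Matrix n n K}
    (h : Disjoint (spectrum K A) (spectrum K B)) : Function.Bijective (sylvesterMap A B) := by
  have hinj : Function.Injective (sylvesterMap A B) := by
    rw [← LinearMap.ker_eq_bot, LinearMap.ker_eq_bot']
    intro X hX
    refine eq_zero_of_mul_eq_mul_of_isUnit_aeval_charpoly ?_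
      (isUnit_aeval_charpoly_of_disjoint_spectrum h)
    simpa [sub_eq_zero] using hX
  exact ⟨hinj, LinearMap.injective_iff_surjective.mp hinj⟩

end Field

end Matrix

theorem sylvester_unique_solution (m n : ℕ)
    (A : Matrix (Fin m) (Fin m) ℂ) (B : Matrix (Fin n) (Fin n) ℂ)
    (h : ∀ μ : ℂ, ¬ (μ ∈ spectrum ℂ A ∧ μ ∈ spectrum ℂ B)) :
    ∀ C : Matrix (Fin m) (Fin n) ℂ,
      ∃! X : Matrix (Fin m) (Fin n) ℂ, X * B - A * X = C := by
  have hdisj : Disjoint (spectrum ℂ A) (spectrum ℂ B) :=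
    Set.disjoint_left.mpr fun μ hA hB => h μ ⟨hA, hB⟩
  intro C
  simpa using (Matrix.sylvesterMap_bijective hdisj).existsUnique C
end

section
/- Let ε ∈ ℝ with 0 < ε < 1/3, and define sequences δ₁ = τ₁ = ε⁵, δ_{i+1} = ε⁻¹δᵢτᵢ, τ_{i+1} = τᵢ + ε⁻¹δᵢ. Then for all i ≥ 1: 0 < δᵢ < ε^{2i} and 0 < τᵢ < ε³. -/
theorem delta_tau_bounds (ε : ℝ) (hε0 : 0 < ε) (hε : ε < 1 / 3)
    (δ τ : ℕ → ℝ)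
    (hδ1 : δ 1 = ε ^ 5) (hτ1 : τ 1 = ε ^ 5)
    (hδ : ∀ i : ℕ, 1 ≤ i → δ (i + 1) = ε⁻¹ * δ i * τ i)
    (hτ : ∀ i : ℕ, 1 ≤ i → τ (i + 1) = τ i + ε⁻¹ * δ i) :
    ∀ i : ℕ, 1 ≤ i → (0 < δ i ∧ δ i < ε ^ (2 * i)) ∧ (0 < τ i ∧ τ i < ε ^ 3) := by
  have hε1 : ε < 1 := by linarith
  have hne : ε ≠ 0 := ne_of_gt hε0
  have key : ∀ i : ℕ, 1 ≤ i →
      (0 < δ i ∧ δ i ≤ ε ^ (2 * i + 3)) ∧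
      (0 < τ i ∧ τ i ≤ ε ^ 3 - 2 * ε ^ (2 * i + 2)) := by
    intro i hi
    induction i, hi using Nat.le_induction with
    | base =>
      rw [hδ1, hτ1]
      refine ⟨⟨pow_pos hε0 5, by norm_num⟩, pow_pos hε0 5, ?_⟩
      norm_num
      nlinarith [pow_pos hε0 3, pow_pos hε0 4, pow_pos hε0 5, sq_nonneg ε]
    | succ n hn ih =>
      obtain ⟨⟨hd0, hdle⟩, ht0, htle⟩ := ih
      have htε3 : τ n ≤ ε ^ 3 := by
        have : 0 < ε ^ (2 * n + 2) := pow_pos hε0 _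
        linarith
      have hinv : (0:ℝ) < ε⁻¹ := inv_pos.mpr hε0
      constructor
      · constructor
        · rw [hδ n hn]; positivity
        · rw [hδ n hn]
          have h1 : δ n * τ n ≤ ε ^ (2 * n + 3) * ε ^ 3 :=
            mul_le_mul hdle htε3 ht0.le (pow_nonneg hε0.le _)
          have h2 : ε⁻¹ * (δ n * τ n) ≤ ε⁻¹ * (ε ^ (2 * n + 3) * ε ^ 3) :=
            mul_le_mul_of_nonneg_left h1 hinv.le
          have h3 : ε⁻¹ * (ε ^ (2 * n + 3) * ε ^ 3) = ε ^ (2 * (n + 1) + 3) := by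
            field_simp
            ring
          calc ε⁻¹ * δ n * τ n = ε⁻¹ * (δ n * τ n) := by ring
            _ ≤ ε⁻¹ * (ε ^ (2 * n + 3) * ε ^ 3) := h2
            _ = ε ^ (2 * (n + 1) + 3) := h3
      · constructor
        · rw [hτ n hn]; positivity
        · rw [hτ n hn]
          have h4 : ε⁻¹ * δ n ≤ ε⁻¹ * ε ^ (2 * n + 3) :=
            mul_le_mul_of_nonneg_left hdle hinv.le
          have h5 : ε⁻¹ * ε ^ (2 * n + 3) = ε ^ (2 * n + 2) := by
            field_simp
            ring
          have h6 : ε ^ (2 * (n + 1) + 2) = ε ^ (2 * n + 2) * ε ^ 2 := by ring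
          have h7 : ε ^ (2 * n + 2) * ε ^ 2 ≤ ε ^ (2 * n + 2) * (1/2) := by
            apply mul_le_mul_of_nonneg_left _ (pow_nonneg hε0.le _)
            nlinarith
          have hp : 0 < ε ^ (2 * n + 2) := pow_pos hε0 _
          rw [h5] at h4
          rw [h6]
          nlinarith
  intro i hi
  obtain ⟨⟨hd0, hdle⟩, ht0, htle⟩ := key i hi
  refine ⟨⟨hd0, ?_⟩, ht0, ?_⟩
  · calc δ i ≤ ε ^ (2 * i + 3) := hdle
      _ < ε ^ (2 * i) := by
        apply pow_lt_pow_right_of_lt_one₀ hε0 hε1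
        omega
  · have : 0 < ε ^ (2 * i + 2) := pow_pos hε0 _
    linarith
end

section
/- Let Γ_n be the n×n matrix with entries Γ_{i,j} = (-1)^{n-i} if i + j = n + 1, Γ_{i,j} = (-1)^{n-i} if i + j = n + 2 (i.e., the ±1 anti-bidiagonal pattern with (n,1)-entry 1 and (n,2)-entry 1), and 0 otherwise. Then Γ_n is invertible, and Γ_n Γ_n^{-T} = (-1)^{n+1}(I - 2N + ⋯) is a lower-triangular matrix whose diagonal entries all equal (-1)^{n+1} and whose first subdiagonal entries all equal (-1)^{n+1}·(-2). -/
/-!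
The inverse of `Γ` is explicit: the sign matrix `(-1) ^ i` supported on the anti-triangle
`i + j < n`. A row `i` of `Γ` has nonzero entries only in the columns `n - 1 - i` and `n - i`,
so every entry of `Γ * Γ⁻¹` or `Γ * Γ⁻ᵀ` is a sum of at most two signs. The entry `(i, j)` of
`Γ * Γ⁻ᵀ` comes out as `(-1) ^ (n - 1 - i + j)` times `[j ≤ i] + [j < i]`.
-/

open Matrix

section

variable (R : Type*) [CommRing R] (n : ℕ)

def gamma : Matrix (Fin n) (Fin n) R :=
  of fun i j =>
    if (i : ℕ) + (j : ℕ) + 1 = n ∨ (i : ℕ) + (j : ℕ) = n then (-1 : R) ^ (n - 1 - (i : ℕ)) else 0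

def gammaInv : Matrix (Fin n) (Fin n) R :=
  of fun i j => if (i : ℕ) + (j : ℕ) < n then (-1 : R) ^ (i : ℕ) else 0

variable {R n}

theorem sum_gamma_mul (i : Fin n) (f : ℕ → R) :
    ∑ j, gamma R n i j * f j =
      (-1) ^ (n - 1 - i) * (f (n - 1 - i) + if 0 < (i : ℕ) then f (n - i) else 0) := by
  have hi := i.isLt
  have ite_split (j : ℕ) :
      (if (i : ℕ) + j + 1 = n ∨ (i : ℕ) + j = n then (-1 : R) ^ (n - 1 - i) else 0) * f j =
        (if n - 1 - i = j then (-1) ^ (n - 1 - i) * f j else 0) +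
          (if n - i = j then (-1) ^ (n - 1 - i) * f j else 0) := by
    split_ifs <;> first | omega | simp
  calc ∑ j, gamma R n i j * f j
      = ∑ j ∈ Finset.range n, ((if n - 1 - i = j then (-1) ^ (n - 1 - i) * f j else 0) +
          (if n - i = j then (-1) ^ (n - 1 - i) * f j else 0)) := by
        rw [← Fin.sum_univ_eq_sum_range]
        simp only [gamma, of_apply, ite_split]
    _ = _ := by
        simp only [Finset.sum_add_distrib, Finset.sum_ite_eq, Finset.mem_range]
        split_ifs <;> first | omega | ring

theorem gamma_mul_gammaInv : gamma R n * gammaInv R n = 1 := by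
  ext i c
  have hi := i.isLt
  have hsucc : n - i = n - 1 - i + 1 := by omega
  simp only [mul_apply, gammaInv, of_apply]
  rw [sum_gamma_mul i fun k => if k + (c : ℕ) < n then (-1 : R) ^ k else 0]
  simp only [one_apply, Fin.ext_iff, hsucc, pow_succ]
  split_ifs <;> first | omega | simp [← mul_pow]

theorem isUnit_gamma : IsUnit (gamma R n) :=
  isUnit_iff_isUnit_det _ |>.2 <| isUnit_det_of_right_inverse gamma_mul_gammaInv

theorem inv_gamma : (gamma R n)⁻¹ = gammaInv R n :=
  inv_eq_right_inv gamma_mul_gammaInv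

theorem gamma_mul_inv_transpose_apply (i j : Fin n) :
    (gamma R n * (gamma R n)⁻¹ᵀ) i j =
      (-1) ^ (n - 1 - i) * (-1) ^ (j : ℕ) *
        ((if (j : ℕ) ≤ i then 1 else 0) + if (j : ℕ) < i then 1 else 0) := by
  have hi := i.isLt
  simp only [inv_gamma, mul_apply, transpose_apply, gammaInv, of_apply]
  rw [sum_gamma_mul i fun k => if (j : ℕ) + k < n then (-1 : R) ^ (j : ℕ) else 0]
  split_ifs <;> first | omega | ring

theorem gamma_mul_inv_transpose_apply_of_lt {i j : Fin n} (h : (i : ℕ) < j) :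
    (gamma R n * (gamma R n)⁻¹ᵀ) i j = 0 := by
  rw [gamma_mul_inv_transpose_apply, if_neg (by omega), if_neg (by omega), add_zero, mul_zero]

theorem gamma_mul_inv_transpose_apply_self (i : Fin n) :
    (gamma R n * (gamma R n)⁻¹ᵀ) i i = (-1) ^ (n + 1) := by
  have hi := i.isLt
  rw [gamma_mul_inv_transpose_apply, if_pos le_rfl, if_neg (lt_irrefl _), add_zero, mul_one,
    pow_sub_mul_pow _ (by omega), show n + 1 = n - 1 + 2 by omega, pow_add, neg_one_sq, mul_one]

theorem gamma_mul_inv_transpose_apply_of_eq_add_one {i j : Fin n} (h : (i : ℕ) = j + 1) :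
    (gamma R n * (gamma R n)⁻¹ᵀ) i j = (-1) ^ n * 2 := by
  have hi := i.isLt
  rw [gamma_mul_inv_transpose_apply, if_pos (by omega), if_pos (by omega),
    show n - 1 - (i : ℕ) = n - 2 - j by omega, pow_sub_mul_pow _ (by omega),
    ← pow_sub_mul_pow (-1 : R) (show 2 ≤ n by omega), neg_one_sq, mul_one, one_add_one_eq_two]

end

theorem gamma_times_inv_transpose_structure (n : ℕ) :
    let Γ : Matrix (Fin n) (Fin n) ℂ :=
      Matrix.of fun i j =>
        if (i : ℕ) + (j : ℕ) + 1 = n ∨ (i : ℕ) + (j : ℕ) = n then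
          (-1 : ℂ) ^ (n - 1 - (i : ℕ))
        else 0
    IsUnit Γ ∧
      (let M := Γ * (Γ⁻¹)ᵀ;
        (∀ i j : Fin n, (i : ℕ) < (j : ℕ) → M i j = 0) ∧
        (∀ i : Fin n, M i i = (-1 : ℂ) ^ (n + 1)) ∧
        (∀ i j : Fin n, (i : ℕ) = (j : ℕ) + 1 → M i j = (-1 : ℂ) ^ n * 2)) :=
  ⟨isUnit_gamma, fun _ _ => gamma_mul_inv_transpose_apply_of_lt, gamma_mul_inv_transpose_apply_self,
    fun _ _ => gamma_mul_inv_transpose_apply_of_eq_add_one⟩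
end
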